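/- The tensor product of wirings is well-defined on renaming classes and satisfies functoriality with respect to the product: for flows f, f', g, g' with the relevant products defined, (f ⊗ g)(f' ⊗ g') = (ff') ⊗ (gg') whenever both sides are defined. -/

import Mathlib

/-- First-order terms over natural-number symbols: variables and applications. -/
inductive Tm : Type
  | var : ℕ → Tm
  | app : ℕ → List Tm → Tm

namespace Tm

/-- Apply a substitution (map from variables to terms) homomorphically. -/
def subst (σ : ℕ → Tm) : Tm → Tm
  | var x => σ x
  | app f ts => app f (ts.attach.map fun ⟨t, _⟩ => subst σ t)

/-- List of variables occurring in a term. -/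
def varsL : Tm → List ℕ
  | var x => [x]
  | app _ ts => ts.attach.flatMap fun ⟨t, _⟩ => varsL t

/-- Height of a term: maximal distance from the root to a subterm. -/
def height : Tm → ℕ
  | var _ => 0
  | app _ ts => (ts.attach.map fun ⟨t, _⟩ => height t + 1).foldr max 0

/-- Heights of the occurrences of the variable `x` in a term. -/
def occs (x : ℕ) : Tm → List ℕ
  | var y => if y = x then [0] else []
  | app _ ts => ts.attach.flatMap fun ⟨t, _⟩ => (occs x t).map (· + 1)

/-- Symbols occurring in a term, together with the arity they are used with. -/
def symar : Tm → List (ℕ × ℕ)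
  | var _ => []
  | app f ts => (f, ts.length) :: ts.attach.flatMap fun ⟨t, _⟩ => symar t

end Tm

open Tm

/-- Set of variables of a term. -/
def tvars (t : Tm) : Set ℕ := {x | x ∈ t.varsL}

/-- A term is closed when it has no variables. -/
def Closed (t : Tm) : Prop := t.varsL = []

/-- A substitution is finitary when it is the identity on all but finitely many variables. -/
def Finitary (σ : ℕ → Tm) : Prop := {x | σ x ≠ .var x}.Finite

/-- `σ` unifies `t` and `u`. -/
def Unifies (σ : ℕ → Tm) (t u : Tm) : Prop := subst σ t = subst σ u

/-- `θ` is a most general unifier of `t` and `u`: a (finitary) unifier such that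
any other finitary unifier factors as an instance of it. -/
def IsMGU (θ : ℕ → Tm) (t u : Tm) : Prop :=
  Finitary θ ∧ Unifies θ t u ∧
    ∀ σ, Finitary σ → Unifies σ t u → ∃ ρ, Finitary ρ ∧ ∀ x, σ x = subst ρ (θ x)

/-- Renaming of a term along a bijection of variables. -/
def rename (π : ℕ ≃ ℕ) (t : Tm) : Tm := subst (fun x => .var (π x)) t

/-- A flow is (the data of) a pair of terms `head ⊸ body`. -/
abbrev UFlow := Tm × Tm

/-- The flow condition: the variables of the head occur in the body. -/
def IsFlow (f : UFlow) : Prop := tvars f.1 ⊆ tvars f.2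

/-- Equality of flows up to (simultaneous, bijective) renaming of variables. -/
def FlowEquiv (f g : UFlow) : Prop :=
  ∃ π : ℕ ≃ ℕ, rename π f.1 = g.1 ∧ rename π f.2 = g.2

/-- Variables of a flow. -/
def flowVars (f : UFlow) : Set ℕ := tvars f.1 ∪ tvars f.2

/-- `h` is a product of the flows `f = u ⊸ v` and `g = t ⊸ w`: choosing representatives
with disjoint variables, `h = uθ ⊸ wθ` for `θ` a most general unifier of `v` and `t`. -/
def IsProd (f g h : UFlow) : Prop :=
  ∃ f' g' θ, FlowEquiv f f' ∧ FlowEquiv g g' ∧ flowVars f' ∩ flowVars g' = ∅ ∧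
    IsMGU θ f'.2 g'.1 ∧ h = (subst θ f'.1, subst θ g'.2)

/-- A wiring: a set of flows (finite sets of flows are considered up to renaming,
so we model them as sets of representatives). -/
abbrev Wiring := Set UFlow

/-- Product of wirings: pointwise product of flows, where defined. -/
def wmul (F G : Wiring) : Wiring := {h | ∃ f ∈ F, ∃ g ∈ G, IsProd f g h}

/-- The unit wiring `I = x ⊸ x`. -/
def wI : Wiring := {f | FlowEquiv (.var 0, .var 0) f}

/-- Powers of a wiring. -/
def wpow (F : Wiring) : ℕ → Wiring
  | 0 => wI
  | n + 1 => wmul F (wpow F n)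

/-- Equality of wirings up to renaming of each flow. -/
def WEq (F G : Wiring) : Prop :=
  (∀ f ∈ F, ∃ g ∈ G, FlowEquiv f g) ∧ ∀ g ∈ G, ∃ f ∈ F, FlowEquiv f g

/-- A fact: a flow of the form `t ⊸ t` with `t` closed. -/
def IsFact (f : UFlow) : Prop := Closed f.1 ∧ f.2 = f.1

/-- Application of a wiring to (the fact associated with) a closed term:
the set of product flows. -/
def appF (F : Wiring) (t : Tm) : Set UFlow := {h | ∃ f ∈ F, IsProd f (t, t) h}

/-- Application of a wiring to a fact, keeping the facts produced. -/
def factApp (F : Wiring) (t : Tm) : Set Tm := {v | ∃ f ∈ F, IsProd f (t, t) (v, v)}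

/-- A wiring is deterministic if it produces at most one fact from any fact. -/
def Deterministic (F : Wiring) : Prop := ∀ t, Closed t → (appF F t).Subsingleton

/-- Two terms are matchable if renamings of them with disjoint variables are unifiable. -/
def Matchable (t u : Tm) : Prop :=
  ∃ (π π' : ℕ ≃ ℕ), tvars (rename π t) ∩ tvars (rename π' u) = ∅ ∧
    ∃ θ, Finitary θ ∧ Unifies θ (rename π t) (rename π' u)

/-- A flow is balanced if each variable has all its occurrences at the same height. -/
def BalancedF (f : UFlow) : Prop :=
  ∀ x, ∀ n ∈ occs x f.1 ++ occs x f.2, ∀ m ∈ occs x f.1 ++ occs x f.2, n = m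

/-- Height of a flow. -/
def heightF (f : UFlow) : ℕ := max f.1.height f.2.height

/-- A wiring is balanced if all its flows are. -/
def BalancedW (F : Wiring) : Prop := ∀ f ∈ F, BalancedF f

/-- Height of a wiring: maximal height of its flows. -/
noncomputable def heightW (F : Wiring) : ℕ := sSup (heightF '' F)

/-- The computation space of a wiring `F`: closed terms (identified with the
corresponding facts) of height at most `heightW F` built using only symbols
(with their arities) occurring in `F` and the constant `⋆` (symbol `0`). -/
noncomputable def compSpace (F : Wiring) : Set Tm :=
  {t | Closed t ∧ t.height ≤ heightW F ∧
    ∀ q ∈ t.symar, q = (0, 0) ∨ ∃ f ∈ F, q ∈ f.1.symar ++ f.2.symar}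

/-- Nilpotency of a wiring: some power is the empty wiring. -/
def Nilpotent (F : Wiring) : Prop := ∃ n, 0 < n ∧ wpow F n = ∅

/-- Edges of the computation graph of `F`: from `u` to `v` iff `v ∈ F u`. -/
noncomputable def Edge (F : Wiring) (u v : Tm) : Prop :=
  u ∈ compSpace F ∧ v ∈ compSpace F ∧ v ∈ factApp F u

/-- Acyclicity of the computation graph of `F`. -/
noncomputable def AcyclicCG (F : Wiring) : Prop :=
  ¬ ∃ n, 0 < n ∧ ∃ c : ℕ → Tm, (∀ i < n, Edge F (c i) (c (i + 1))) ∧ c n = c 0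

/-- The binary function symbol `•` used for tensor products (symbol `1`). -/
def bu (a b : Tm) : Tm := .app 1 [a, b]

/-- `h` is a tensor product of the flows `f = u ⊸ v` and `g = t ⊸ w`: choosing
representatives with disjoint variables, `h = (u • t) ⊸ (v • w)`. -/
def IsTensor (f g h : UFlow) : Prop :=
  ∃ f' g', FlowEquiv f f' ∧ FlowEquiv g g' ∧ flowVars f' ∩ flowVars g' = ∅ ∧
    h = (bu f'.1 g'.1, bu f'.2 g'.2)

/-!
Tensoring puts two unification problems side by side under `•`, and problems on disjoint sets
of variables are solved independently: if `θ₁` solves the `f`-side problem and maps a set `V`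
containing its variables into terms over `V`, while `θ₂` solves the `g`-side problem and does
the same for `Vᶜ`, then `θ₁` on `V` glued to `θ₂` off `V` is a most general unifier of the
tensored problem, and it computes `(ff') ⊗ (gg')`. Such a pair exists because unifiers are
finitary: `θ₁` fixes every variable outside some finite set closed under it, and a finitary
renaming moves the `g`-side computation away from that set. Well-definedness, of tensors and of
products, comes from renaming two variable-disjoint flows by one permutation, and from two most
general unifiers of one problem differing by a renaming.
-/

namespace Tm

theorem induction {P : Tm → Prop} (var : ∀ x, P (.var x))
    (app : ∀ f ts, (∀ t ∈ ts, P t) → P (.app f ts)) (t : Tm) : P t := by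
  induction t using Tm.rec (motive_2 := fun ts => ∀ t ∈ ts, P t) with
  | var x => exact var x
  | app f ts ih => exact app f ts ih
  | nil => simp_all
  | cons t ts ht hts =>
    rename_i u hu
    rcases List.mem_cons.1 hu with rfl | hu
    exacts [ht, hts u hu]

@[simp] theorem subst_var (σ : ℕ → Tm) (x : ℕ) : subst σ (.var x) = σ x := by
  rw [subst]

@[simp] theorem subst_app (σ : ℕ → Tm) (f : ℕ) (ts : List Tm) :
    subst σ (.app f ts) = .app f (ts.map (subst σ)) := by
  rw [subst]; simp

@[simp] theorem varsL_var (x : ℕ) : varsL (.var x) = [x] := by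
  rw [varsL]

@[simp] theorem varsL_app (f : ℕ) (ts : List Tm) : varsL (.app f ts) = ts.flatMap varsL := by
  rw [varsL]; simp only [List.flatMap_def, List.attach_map_val]

/-- The index of a variable; junk value `0` on applications. -/
def varIdx : Tm → ℕ
  | var x => x
  | app _ _ => 0

end Tm

open Tm

@[simp] theorem tvars_var (x : ℕ) : tvars (.var x) = {x} := by
  ext; simp [tvars]

theorem mem_tvars_app {f : ℕ} {ts : List Tm} {x : ℕ} :
    x ∈ tvars (.app f ts) ↔ ∃ t ∈ ts, x ∈ tvars t := by
  simp [tvars]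

theorem tvars_finite (t : Tm) : (tvars t).Finite :=
  t.varsL.finite_toSet

theorem mem_tvars_subst {σ : ℕ → Tm} {t : Tm} {y : ℕ} :
    y ∈ tvars (subst σ t) ↔ ∃ x ∈ tvars t, y ∈ tvars (σ x) := by
  induction t using Tm.induction with
  | var x => simp
  | app f ts ih =>
    simp only [subst_app, mem_tvars_app, List.mem_map]
    constructor
    · rintro ⟨_, ⟨u, hu, rfl⟩, hy⟩
      obtain ⟨x, hx, hyx⟩ := (ih u hu).1 hy
      exact ⟨x, ⟨u, hu, hx⟩, hyx⟩
    · rintro ⟨x, ⟨u, hu, hx⟩, hyx⟩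
      exact ⟨_, ⟨u, hu, rfl⟩, (ih u hu).2 ⟨x, hx, hyx⟩⟩

theorem subst_congr {σ τ : ℕ → Tm} {t : Tm} (h : Set.EqOn σ τ (tvars t)) :
    subst σ t = subst τ t := by
  induction t using Tm.induction with
  | var x => simpa using h (by simp)
  | app f ts ih =>
    simp only [subst_app, Tm.app.injEq, true_and]
    exact List.map_congr_left fun u hu =>
      ih u hu fun x hx => h (mem_tvars_app.2 ⟨u, hu, hx⟩)

theorem subst_subst (σ τ : ℕ → Tm) (t : Tm) :
    subst τ (subst σ t) = subst (fun x => subst τ (σ x)) t := by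
  induction t using Tm.induction with
  | var x => simp
  | app f ts ih =>
    simp only [subst_app, List.map_map, Tm.app.injEq, true_and]
    exact List.map_congr_left ih

theorem subst_id (t : Tm) : subst .var t = t := by
  induction t using Tm.induction with
  | var x => simp
  | app f ts ih => simpa using List.map_congr_left ih

theorem eqOn_var_of_subst_eq_self {σ : ℕ → Tm} {t : Tm} (h : subst σ t = t) :
    Set.EqOn σ .var (tvars t) := by
  induction t using Tm.induction with
  | var x => simpa using h
  | app f ts ih =>
    simp only [subst_app, Tm.app.injEq, true_and] at h
    intro x hx
    obtain ⟨u, hu, hxu⟩ := mem_tvars_app.1 hx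
    exact ih u hu (List.map_inj_left.1 (h.trans (List.map_id ts).symm) u hu) hxu

theorem eq_var_of_subst_eq_var {σ : ℕ → Tm} {t : Tm} {y : ℕ} (h : subst σ t = .var y) :
    t = .var t.varIdx ∧ σ t.varIdx = .var y := by
  cases t with
  | var x => simpa [varIdx] using h
  | app f ts => simp at h

theorem subst_rename (π : ℕ ≃ ℕ) (σ : ℕ → Tm) (t : Tm) :
    subst σ (rename π t) = subst (fun x => σ (π x)) t := by
  rw [rename, subst_subst]
  simp

theorem rename_subst (π : ℕ ≃ ℕ) (σ : ℕ → Tm) (t : Tm) :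
    rename π (subst σ t) = subst (fun x => rename π (σ x)) t := by
  rw [rename, subst_subst]; rfl

theorem rename_rename (π π' : ℕ ≃ ℕ) (t : Tm) :
    rename π' (rename π t) = rename (π.trans π') t := by
  simp [rename, subst_subst]

theorem rename_refl (t : Tm) : rename (Equiv.refl ℕ) t = t :=
  subst_id t

theorem rename_congr {π π' : ℕ ≃ ℕ} {t : Tm} (h : Set.EqOn π π' (tvars t)) :
    rename π t = rename π' t :=
  subst_congr fun x hx => by simp [h hx]

theorem tvars_rename (π : ℕ ≃ ℕ) (t : Tm) : tvars (rename π t) = π '' tvars t := by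
  ext y
  simp only [rename, mem_tvars_subst, tvars_var, Set.mem_singleton_iff, Set.mem_image, eq_comm]

theorem tvars_bu (a b : Tm) : tvars (bu a b) = tvars a ∪ tvars b := by
  ext x
  simp [bu, mem_tvars_app]

theorem subst_bu (σ : ℕ → Tm) (a b : Tm) : subst σ (bu a b) = bu (subst σ a) (subst σ b) := by
  simp [bu]

theorem rename_bu (π : ℕ ≃ ℕ) (a b : Tm) : rename π (bu a b) = bu (rename π a) (rename π b) :=
  subst_bu _ a b

theorem bu_inj {a b c d : Tm} : bu a b = bu c d ↔ a = c ∧ b = d := by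
  simp [bu]

section FinitePerm

variable {α : Type*}

theorem exists_perm_eqOn_of_injOn {S : Set α} (hS : S.Finite) {h : α → α}
    (hh : Set.InjOn h S) : ∃ π : Equiv.Perm α, {x | π x ≠ x}.Finite ∧ Set.EqOn π h S := by
  classical
  set T := S ∪ h '' S
  have : Finite S := hS.to_subtype
  have : Finite T := (hS.union (hS.image h)).to_subtype
  obtain ⟨σ, hσ⟩ := Equiv.Perm.exists_extending_pair
    (fun x : S => (⟨x, Or.inl x.2⟩ : T)) (fun x : S => (⟨h x, Or.inr ⟨x, x.2, rfl⟩⟩ : T))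
    (fun x y hxy => Subtype.ext (congrArg (fun z : T => (z : α)) hxy))
    (fun x y hxy => Subtype.ext (hh x.2 y.2 (congrArg (fun z : T => (z : α)) hxy)))
  refine ⟨Equiv.Perm.ofSubtype σ, (hS.union (hS.image h)).subset fun x hx => ?_, fun x hx => ?_⟩
  · by_contra hxT
    exact hx (Equiv.Perm.ofSubtype_apply_of_not_mem σ hxT)
  · rw [Equiv.Perm.ofSubtype_apply_of_mem σ (Or.inl hx)]
    exact congrArg Subtype.val (hσ ⟨x, hx⟩)

theorem finite_support_symm {π : Equiv.Perm α} (hπ : {x | π x ≠ x}.Finite) :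
    {x | π.symm x ≠ x}.Finite := by
  convert hπ using 3 with x
  exact not_congr (π.symm_apply_eq.trans eq_comm)

end FinitePerm

theorem exists_perm_image_disjoint {S T : Set ℕ} (hS : S.Finite) (hT : T.Finite) :
    ∃ π : Equiv.Perm ℕ, {x | π x ≠ x}.Finite ∧ Disjoint (π '' S) T := by
  obtain ⟨N, hN⟩ := hT.bddAbove
  obtain ⟨π, hπ, hπS⟩ :=
    exists_perm_eqOn_of_injOn hS (h := (· + (N + 1))) fun x _ y _ h => by simpa using h
  refine ⟨π, hπ, Set.disjoint_left.2 ?_⟩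
  rintro _ ⟨x, hx, rfl⟩ hxT
  have : π x ≤ N := hN hxT
  have hx' : π x = x + (N + 1) := hπS hx
  omega

def renameFlow (π : ℕ ≃ ℕ) (F : UFlow) : UFlow := (rename π F.1, rename π F.2)

theorem flowEquiv_iff {f g : UFlow} : FlowEquiv f g ↔ ∃ π, renameFlow π f = g := by
  simp [FlowEquiv, renameFlow, Prod.ext_iff]

theorem flowEquiv_renameFlow (π : ℕ ≃ ℕ) (F : UFlow) : FlowEquiv F (renameFlow π F) :=
  ⟨π, rfl, rfl⟩

theorem FlowEquiv.refl (f : UFlow) : FlowEquiv f f :=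
  ⟨Equiv.refl ℕ, rename_refl _, rename_refl _⟩

theorem FlowEquiv.symm {f g : UFlow} (h : FlowEquiv f g) : FlowEquiv g f := by
  obtain ⟨π, h₁, h₂⟩ := h
  exact ⟨π.symm, by simp [← h₁, rename_rename, rename_refl],
    by simp [← h₂, rename_rename, rename_refl]⟩

theorem FlowEquiv.trans {f g h : UFlow} (hfg : FlowEquiv f g) (hgh : FlowEquiv g h) :
    FlowEquiv f h := by
  obtain ⟨π, h₁, h₂⟩ := hfg
  obtain ⟨π', h₁', h₂'⟩ := hgh
  exact ⟨π.trans π', by rw [← rename_rename, h₁, h₁'], by rw [← rename_rename, h₂, h₂']⟩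

theorem flowVars_finite (f : UFlow) : (flowVars f).Finite :=
  (tvars_finite f.1).union (tvars_finite f.2)

theorem flowVars_renameFlow (π : ℕ ≃ ℕ) (F : UFlow) :
    flowVars (renameFlow π F) = π '' flowVars F := by
  simp [flowVars, renameFlow, tvars_rename, Set.image_union]

theorem renameFlow_congr {π π' : ℕ ≃ ℕ} {F : UFlow} (h : Set.EqOn π π' (flowVars F)) :
    renameFlow π F = renameFlow π' F := by
  simp only [renameFlow, rename_congr (h.mono Set.subset_union_left),
    rename_congr (h.mono Set.subset_union_right)]

theorem FlowEquiv.exists_joint_rename {A B A' B' : UFlow} (hA : FlowEquiv A A')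
    (hB : FlowEquiv B B') (hAB : flowVars A ∩ flowVars B = ∅)
    (hAB' : flowVars A' ∩ flowVars B' = ∅) :
    ∃ π : ℕ ≃ ℕ, {x | π x ≠ x}.Finite ∧ renameFlow π A = A' ∧ renameFlow π B = B' := by
  classical
  obtain ⟨π₁, rfl⟩ := flowEquiv_iff.1 hA
  obtain ⟨π₂, rfl⟩ := flowEquiv_iff.1 hB
  rw [← Set.disjoint_iff_inter_eq_empty] at hAB hAB'
  rw [flowVars_renameFlow, flowVars_renameFlow] at hAB'
  set h := (flowVars A).piecewise π₁ π₂
  have hA : Set.EqOn h π₁ (flowVars A) := Set.piecewise_eqOn _ _ _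
  have hB : Set.EqOn h π₂ (flowVars B) :=
    (Set.piecewise_eqOn_compl _ _ _).mono fun x hx hxA => hAB.ne_of_mem hxA hx rfl
  have hinj : Set.InjOn h (flowVars A ∪ flowVars B) := by
    refine (Set.injOn_union hAB).2 ⟨?_, ?_, fun x hx y hy hxy => ?_⟩
    · exact (π₁.injective.injOn).congr hA.symm
    · exact (π₂.injective.injOn).congr hB.symm
    · rw [hA hx, hB hy] at hxy
      exact hAB'.ne_of_mem ⟨x, hx, rfl⟩ ⟨y, hy, rfl⟩ hxy
  obtain ⟨π, hπ, hπh⟩ := exists_perm_eqOn_of_injOn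
    ((flowVars_finite A).union (flowVars_finite B)) hinj
  exact ⟨π, hπ, renameFlow_congr ((hπh.mono Set.subset_union_left).trans hA),
    renameFlow_congr ((hπh.mono Set.subset_union_right).trans hB)⟩

theorem IsMGU.finitary {θ : ℕ → Tm} {s t : Tm} (h : IsMGU θ s t) : Finitary θ := h.1

theorem IsMGU.unifies {θ : ℕ → Tm} {s t : Tm} (h : IsMGU θ s t) : Unifies θ s t := h.2.1

theorem IsMGU.exists_eq_subst {θ : ℕ → Tm} {s t : Tm} (h : IsMGU θ s t) {σ : ℕ → Tm}
    (hσ : Finitary σ) (hσst : Unifies σ s t) :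
    ∃ ρ, Finitary ρ ∧ ∀ x, σ x = subst ρ (θ x) :=
  h.2.2 σ hσ hσst

theorem Finitary.piecewise {σ τ : ℕ → Tm} (hσ : Finitary σ) (hτ : Finitary τ) (V : Set ℕ)
    [∀ x, Decidable (x ∈ V)] : Finitary (V.piecewise σ τ) := by
  refine (hσ.union hτ).subset fun x hx => ?_
  by_cases hxV : x ∈ V
  · exact Or.inl (by simpa [Set.piecewise_eq_of_mem _ _ _ hxV] using hx)
  · exact Or.inr (by simpa [Set.piecewise_eq_of_notMem _ _ _ hxV] using hx)

theorem Finitary.comp_perm {σ : ℕ → Tm} (hσ : Finitary σ) {π : ℕ ≃ ℕ}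
    (hπ : {x | π x ≠ x}.Finite) : Finitary (fun x => σ (π x)) := by
  refine ((hσ.preimage π.injective.injOn).union hπ).subset fun x hx => ?_
  by_cases hπx : π x = x
  · exact Or.inl (by simpa [hπx] using hx)
  · exact Or.inr hπx

def conjSubst (π : ℕ ≃ ℕ) (θ : ℕ → Tm) : ℕ → Tm := fun x => rename π (θ (π.symm x))

theorem subst_conjSubst_rename (π : ℕ ≃ ℕ) (θ : ℕ → Tm) (t : Tm) :
    subst (conjSubst π θ) (rename π t) = rename π (subst θ t) := by
  simp [conjSubst, subst_rename, rename_subst]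

theorem Finitary.conjSubst {θ : ℕ → Tm} (hθ : Finitary θ) (π : ℕ ≃ ℕ) :
    Finitary (conjSubst π θ) := by
  refine (hθ.image π).subset fun x hx => ⟨π.symm x, fun h => hx ?_, by simp⟩
  simp [_root_.conjSubst, h, rename]

theorem IsMGU.conjSubst {θ : ℕ → Tm} {s t : Tm} (h : IsMGU θ s t) {π : ℕ ≃ ℕ}
    (hπ : {x | π x ≠ x}.Finite) : IsMGU (conjSubst π θ) (rename π s) (rename π t) := by
  obtain ⟨hθ, hst, hgen⟩ := h
  refine ⟨hθ.conjSubst π, ?_, fun σ hσ hσst => ?_⟩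
  · rw [Unifies, subst_conjSubst_rename, subst_conjSubst_rename, hst]
  · have hσst' : Unifies (fun x => σ (π x)) s t := by
      rwa [Unifies, ← subst_rename, ← subst_rename]
    obtain ⟨ρ, hρ, hσρ⟩ := hgen _ (hσ.comp_perm hπ) hσst'
    refine ⟨fun x => ρ (π.symm x), hρ.comp_perm (finite_support_symm hπ), fun x => ?_⟩
    simpa [_root_.conjSubst, subst_rename] using hσρ (π.symm x)

theorem IsMGU.exists_rename_subst_eq {θ θ' : ℕ → Tm} {s t : Tm} (h : IsMGU θ s t)
    (h' : IsMGU θ' s t) {S : Set ℕ} (hS : S.Finite) :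
    ∃ π : ℕ ≃ ℕ, ∀ u, tvars u ⊆ S → rename π (subst θ u) = subst θ' u := by
  obtain ⟨ρ, -, hρ⟩ := h.exists_eq_subst h'.finitary h'.unifies
  obtain ⟨ρ', -, hρ'⟩ := h'.exists_eq_subst h.finitary h.unifies
  set W := ⋃ x ∈ S, tvars (θ x)
  -- `ρ'` undoes `ρ` on the variables of `θ`, so `ρ` renames them injectively.
  have hρW : ∀ y ∈ W, ρ y = .var (ρ y).varIdx ∧ ρ' (ρ y).varIdx = .var y := by
    intro y hy
    obtain ⟨x, -, hyx⟩ := Set.mem_iUnion₂.1 hy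
    refine eq_var_of_subst_eq_var
      (eqOn_var_of_subst_eq_self (σ := fun y => subst ρ' (ρ y)) (t := θ x) ?_ hyx)
    rw [← subst_subst, ← hρ, ← hρ']
  have hinj : Set.InjOn (fun y => (ρ y).varIdx) W := fun y₁ hy₁ y₂ hy₂ h => by
    simpa [← h, (hρW y₁ hy₁).2] using (hρW y₂ hy₂).2
  obtain ⟨π, -, hπ⟩ :=
    exists_perm_eqOn_of_injOn (hS.biUnion fun x _ => tvars_finite (θ x)) hinj
  refine ⟨π, fun u hu => ?_⟩
  rw [rename_subst]
  refine subst_congr fun x hx => ?_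
  rw [hρ, rename]
  refine subst_congr fun y hy => ?_
  have hyW : y ∈ W := Set.mem_biUnion (hu hx) hy
  simp [hπ hyW, ← (hρW y hyW).1]

def PreservesVars (θ : ℕ → Tm) (V : Set ℕ) : Prop := ∀ x ∈ V, tvars (θ x) ⊆ V

structure IsConfined (θ : ℕ → Tm) (V : Set ℕ) : Prop where
  eq_var_of_notMem : ∀ x ∉ V, θ x = .var x
  preservesVars : PreservesVars θ V

theorem PreservesVars.tvars_subst_subset {θ : ℕ → Tm} {V : Set ℕ} (hθ : PreservesVars θ V)
    {t : Tm} (ht : tvars t ⊆ V) : tvars (subst θ t) ⊆ V := fun y hy => by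
  obtain ⟨x, hx, hyx⟩ := mem_tvars_subst.1 hy
  exact hθ x (ht hx) hyx

theorem Finitary.exists_isConfined {θ : ℕ → Tm} (hθ : Finitary θ) {S : Set ℕ}
    (hS : S.Finite) : ∃ V : Set ℕ, V.Finite ∧ S ⊆ V ∧ IsConfined θ V := by
  set D := {x | θ x ≠ .var x}
  refine ⟨S ∪ D ∪ ⋃ x ∈ D, tvars (θ x),
    (hS.union hθ).union (hθ.biUnion fun x _ => tvars_finite (θ x)),
    Set.subset_union_left.trans Set.subset_union_left, fun x hx => ?_, fun x hx y hy => ?_⟩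
  · by_contra hxD
    exact hx (Or.inl (Or.inr hxD))
  · by_cases hxD : x ∈ D
    · exact Or.inr (Set.mem_biUnion hxD hy)
    · rw [show θ x = .var x by simpa [D] using hxD, tvars_var] at hy
      rwa [hy]

theorem IsConfined.conjSubst {θ : ℕ → Tm} {V : Set ℕ} (hθ : IsConfined θ V) (π : ℕ ≃ ℕ) :
    IsConfined (conjSubst π θ) (π '' V) := by
  refine ⟨fun x hx => ?_, fun x hx => ?_⟩
  · rw [Set.mem_image_equiv] at hx
    simp [_root_.conjSubst, hθ.eq_var_of_notMem _ hx, rename]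
  · rw [_root_.conjSubst, tvars_rename]
    exact Set.image_mono (hθ.preservesVars _ (Set.mem_image_equiv.1 hx))

theorem IsConfined.preservesVars_compl {θ : ℕ → Tm} {V W : Set ℕ} (hθ : IsConfined θ V)
    (hVW : Disjoint V W) : PreservesVars θ Wᶜ := by
  intro x hx
  by_cases hxV : x ∈ V
  · exact (hθ.preservesVars x hxV).trans hVW.subset_compl_right
  · simpa [hθ.eq_var_of_notMem x hxV] using hx

theorem exists_isMGU_bu {θ₁ θ₂ : ℕ → Tm} {s₁ t₁ s₂ t₂ : Tm} {V : Set ℕ}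
    (h₁ : IsMGU θ₁ s₁ t₁) (h₂ : IsMGU θ₂ s₂ t₂) (hθ₁ : PreservesVars θ₁ V)
    (hθ₂ : PreservesVars θ₂ Vᶜ) (h₁V : tvars s₁ ∪ tvars t₁ ⊆ V)
    (h₂V : tvars s₂ ∪ tvars t₂ ⊆ Vᶜ) :
    ∃ θ, IsMGU θ (bu s₁ s₂) (bu t₁ t₂) ∧ Set.EqOn θ θ₁ V ∧ Set.EqOn θ θ₂ Vᶜ := by
  classical
  have hl : ∀ {σ τ : ℕ → Tm} {t : Tm}, tvars t ⊆ V → subst (V.piecewise σ τ) t = subst σ t :=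
    fun h => subst_congr ((Set.piecewise_eqOn _ _ _).mono h)
  have hr : ∀ {σ τ : ℕ → Tm} {t : Tm}, tvars t ⊆ Vᶜ → subst (V.piecewise σ τ) t = subst τ t :=
    fun h => subst_congr ((Set.piecewise_eqOn_compl _ _ _).mono h)
  refine ⟨V.piecewise θ₁ θ₂, ⟨h₁.finitary.piecewise h₂.finitary V, ?_, fun σ hσ hσst => ?_⟩,
    Set.piecewise_eqOn _ _ _, Set.piecewise_eqOn_compl _ _ _⟩
  · rw [Unifies, subst_bu, subst_bu, hl (h₁V.trans' Set.subset_union_left),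
      hl (h₁V.trans' Set.subset_union_right), hr (h₂V.trans' Set.subset_union_left),
      hr (h₂V.trans' Set.subset_union_right), h₁.unifies, h₂.unifies]
  · rw [Unifies, subst_bu, subst_bu, bu_inj] at hσst
    obtain ⟨ρ₁, hρ₁, hσρ₁⟩ := h₁.exists_eq_subst hσ hσst.1
    obtain ⟨ρ₂, hρ₂, hσρ₂⟩ := h₂.exists_eq_subst hσ hσst.2
    refine ⟨V.piecewise ρ₁ ρ₂, hρ₁.piecewise hρ₂ V, fun x => ?_⟩
    by_cases hx : x ∈ V
    · rw [Set.piecewise_eq_of_mem _ _ _ hx, hl (hθ₁ x hx)]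
      exact hσρ₁ x
    · rw [Set.piecewise_eq_of_notMem _ _ _ hx, hr (hθ₂ x hx)]
      exact hσρ₂ x

structure IsProdWitness (f g F G : UFlow) (θ : ℕ → Tm) : Prop where
  flowEquiv_left : FlowEquiv f F
  flowEquiv_right : FlowEquiv g G
  disjoint : flowVars F ∩ flowVars G = ∅
  isMGU : IsMGU θ F.2 G.1

def prodFlow (θ : ℕ → Tm) (F G : UFlow) : UFlow := (subst θ F.1, subst θ G.2)

theorem isProd_iff {f g h : UFlow} :
    IsProd f g h ↔ ∃ F G θ, IsProdWitness f g F G θ ∧ h = prodFlow θ F G := by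
  constructor
  · rintro ⟨F, G, θ, hF, hG, hFG, hθ, rfl⟩
    exact ⟨F, G, θ, ⟨hF, hG, hFG, hθ⟩, rfl⟩
  · rintro ⟨F, G, θ, ⟨hF, hG, hFG, hθ⟩, rfl⟩
    exact ⟨F, G, θ, hF, hG, hFG, hθ, rfl⟩

theorem IsProdWitness.renameFlow {f g F G : UFlow} {θ : ℕ → Tm} (hw : IsProdWitness f g F G θ)
    {π : ℕ ≃ ℕ} (hπ : {x | π x ≠ x}.Finite) :
    IsProdWitness f g (renameFlow π F) (renameFlow π G) (conjSubst π θ) := by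
  obtain ⟨hF, hG, hFG, hθ⟩ := hw
  refine ⟨hF.trans (flowEquiv_renameFlow π F), hG.trans (flowEquiv_renameFlow π G), ?_,
    hθ.conjSubst hπ⟩
  rw [flowVars_renameFlow, flowVars_renameFlow, ← Set.image_inter π.injective, hFG,
    Set.image_empty]

theorem prodFlow_conjSubst (π : ℕ ≃ ℕ) (θ : ℕ → Tm) (F G : UFlow) :
    prodFlow (conjSubst π θ) (renameFlow π F) (renameFlow π G) =
      renameFlow π (prodFlow θ F G) := by
  simp [prodFlow, renameFlow, subst_conjSubst_rename]

theorem flowVars_prodFlow_subset {θ : ℕ → Tm} {V : Set ℕ} (hθ : PreservesVars θ V)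
    {F G : UFlow} (hFG : flowVars F ∪ flowVars G ⊆ V) : flowVars (prodFlow θ F G) ⊆ V :=
  Set.union_subset
    (hθ.tvars_subst_subset ((Set.subset_union_left.trans Set.subset_union_left).trans hFG))
    (hθ.tvars_subst_subset ((Set.subset_union_right.trans Set.subset_union_right).trans hFG))

theorem IsProd.unique {f g h h' : UFlow} (hh : IsProd f g h) (hh' : IsProd f g h') :
    FlowEquiv h h' := by
  obtain ⟨F, G, θ, hw, rfl⟩ := isProd_iff.1 hh
  obtain ⟨F', G', θ', hw', rfl⟩ := isProd_iff.1 hh'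
  obtain ⟨π, hπ, rfl, rfl⟩ := (hw.flowEquiv_left.symm.trans hw'.flowEquiv_left).exists_joint_rename
    (hw.flowEquiv_right.symm.trans hw'.flowEquiv_right) hw.disjoint hw'.disjoint
  obtain ⟨ρ, hρ⟩ := (hw.renameFlow hπ).isMGU.exists_rename_subst_eq hw'.isMGU
    ((flowVars_finite (renameFlow π F)).union (flowVars_finite (renameFlow π G)))
  refine (flowEquiv_renameFlow π _).trans ?_
  rw [← prodFlow_conjSubst]
  refine flowEquiv_iff.2 ⟨ρ, ?_⟩
  simp only [renameFlow, prodFlow, Prod.mk.injEq]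
  exact ⟨hρ _ (Set.subset_union_left.trans Set.subset_union_left),
    hρ _ (Set.subset_union_right.trans Set.subset_union_right)⟩

theorem IsProd.exists_isConfined_witness {f g h : UFlow} (hh : IsProd f g h) {T : Set ℕ}
    (hT : T.Finite) :
    ∃ F G θ V, IsProdWitness f g F G θ ∧ FlowEquiv h (prodFlow θ F G) ∧ V.Finite ∧
      flowVars F ∪ flowVars G ⊆ V ∧ IsConfined θ V ∧ Disjoint V T := by
  obtain ⟨F, G, θ, hw, rfl⟩ := isProd_iff.1 hh
  obtain ⟨V, hV, hFGV, hθV⟩ :=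
    hw.isMGU.finitary.exists_isConfined ((flowVars_finite F).union (flowVars_finite G))
  obtain ⟨π, hπ, hπV⟩ := exists_perm_image_disjoint hV hT
  refine ⟨renameFlow π F, renameFlow π G, conjSubst π θ, π '' V, hw.renameFlow hπ, ?_,
    hV.image π, ?_, hθV.conjSubst π, hπV⟩
  · rw [prodFlow_conjSubst]
    exact flowEquiv_renameFlow π _
  · rw [flowVars_renameFlow, flowVars_renameFlow, ← Set.image_union]
    exact Set.image_mono hFGV

def tensorFlow (F G : UFlow) : UFlow := (bu F.1 G.1, bu F.2 G.2)

theorem flowVars_tensorFlow (F G : UFlow) :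
    flowVars (tensorFlow F G) = flowVars F ∪ flowVars G := by
  simp only [flowVars, tensorFlow, tvars_bu]
  exact Set.union_union_union_comm _ _ _ _

theorem renameFlow_tensorFlow (π : ℕ ≃ ℕ) (F G : UFlow) :
    renameFlow π (tensorFlow F G) = tensorFlow (renameFlow π F) (renameFlow π G) := by
  simp [renameFlow, tensorFlow, rename_bu]

theorem prodFlow_tensorFlow {θ θ₁ θ₂ : ℕ → Tm} {F₁ F₂ F₃ F₄ : UFlow}
    (hθ₁ : Set.EqOn θ θ₁ (flowVars F₁ ∪ flowVars F₂))
    (hθ₂ : Set.EqOn θ θ₂ (flowVars F₃ ∪ flowVars F₄)) :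
    prodFlow θ (tensorFlow F₁ F₃) (tensorFlow F₂ F₄) =
      tensorFlow (prodFlow θ₁ F₁ F₂) (prodFlow θ₂ F₃ F₄) := by
  simp only [prodFlow, tensorFlow, subst_bu,
    subst_congr (hθ₁.mono (Set.subset_union_left.trans Set.subset_union_left)),
    subst_congr (hθ₁.mono (Set.subset_union_right.trans Set.subset_union_right)),
    subst_congr (hθ₂.mono (Set.subset_union_left.trans Set.subset_union_left)),
    subst_congr (hθ₂.mono (Set.subset_union_right.trans Set.subset_union_right))]

theorem IsTensor.unique {f g h f₂ g₂ h₂ : UFlow} (ht : IsTensor f g h)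
    (ht₂ : IsTensor f₂ g₂ h₂) (hf : FlowEquiv f f₂) (hg : FlowEquiv g g₂) : FlowEquiv h h₂ := by
  obtain ⟨F, G, hF, hG, hFG, rfl⟩ := ht
  obtain ⟨F₂, G₂, hF₂, hG₂, hFG₂, rfl⟩ := ht₂
  obtain ⟨π, -, hπF, hπG⟩ := (hF.symm.trans (hf.trans hF₂)).exists_joint_rename
    (hG.symm.trans (hg.trans hG₂)) hFG hFG₂
  refine flowEquiv_iff.2 ⟨π, ?_⟩
  change renameFlow π (tensorFlow F G) = tensorFlow F₂ G₂
  rw [renameFlow_tensorFlow, hπF, hπG]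

theorem flowEquiv_prod_tensor {f g f' g' a b c p q d : UFlow} (hta : IsTensor f g a)
    (htb : IsTensor f' g' b) (hab : IsProd a b c) (hp : IsProd f f' p) (hq : IsProd g g' q)
    (htd : IsTensor p q d) : FlowEquiv c d := by
  obtain ⟨F₁, F₂, θ₁, V, hw₁, hp₁, hV, hF₁₂, hθ₁, -⟩ :=
    hp.exists_isConfined_witness Set.finite_empty
  obtain ⟨F₃, F₄, θ₂, W, hw₂, hq₂, -, hF₃₄W, hθ₂, hWV⟩ := hq.exists_isConfined_witness hV
  have hF₃₄ : flowVars F₃ ∪ flowVars F₄ ⊆ Vᶜ := hF₃₄W.trans hWV.subset_compl_right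
  have hθ₂V : PreservesVars θ₂ Vᶜ := hθ₂.preservesVars_compl hWV
  obtain ⟨hF₁, hF₂⟩ := Set.union_subset_iff.1 hF₁₂
  obtain ⟨hF₃, hF₄⟩ := Set.union_subset_iff.1 hF₃₄
  have hVV : Disjoint V Vᶜ := disjoint_compl_right
  have hsub (F G : UFlow) : tvars F.2 ∪ tvars G.1 ⊆ flowVars F ∪ flowVars G :=
    Set.union_subset_union Set.subset_union_right Set.subset_union_left
  obtain ⟨θ, hθ, hθθ₁, hθθ₂⟩ := exists_isMGU_bu hw₁.isMGU hw₂.isMGU hθ₁.preservesVars hθ₂V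
    ((hsub _ _).trans hF₁₂) ((hsub _ _).trans hF₃₄)
  have ha : FlowEquiv a (tensorFlow F₁ F₃) := hta.unique ⟨F₁, F₃, hw₁.flowEquiv_left,
    hw₂.flowEquiv_left, Set.disjoint_iff_inter_eq_empty.1 (hVV.mono hF₁ hF₃), rfl⟩
    (.refl f) (.refl g)
  have hb : FlowEquiv b (tensorFlow F₂ F₄) := htb.unique ⟨F₂, F₄, hw₁.flowEquiv_right,
    hw₂.flowEquiv_right, Set.disjoint_iff_inter_eq_empty.1 (hVV.mono hF₂ hF₄), rfl⟩
    (.refl f') (.refl g')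
  have hab₀ : flowVars (tensorFlow F₁ F₃) ∩ flowVars (tensorFlow F₂ F₄) = ∅ := by
    rw [flowVars_tensorFlow, flowVars_tensorFlow, ← Set.disjoint_iff_inter_eq_empty]
    exact .union_left (.union_right (Set.disjoint_iff_inter_eq_empty.2 hw₁.disjoint)
      (hVV.mono hF₁ hF₄)) (.union_right (hVV.symm.mono hF₃ hF₂)
      (Set.disjoint_iff_inter_eq_empty.2 hw₂.disjoint))
  have hc : IsProd a b (prodFlow θ (tensorFlow F₁ F₃) (tensorFlow F₂ F₄)) :=
    isProd_iff.2 ⟨_, _, θ, ⟨ha, hb, hab₀, hθ⟩, rfl⟩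
  rw [prodFlow_tensorFlow (hθθ₁.mono hF₁₂) (hθθ₂.mono hF₃₄)] at hc
  have hd : IsTensor p q (tensorFlow (prodFlow θ₁ F₁ F₂) (prodFlow θ₂ F₃ F₄)) :=
    ⟨_, _, hp₁, hq₂, Set.disjoint_iff_inter_eq_empty.1 (hVV.mono
      (flowVars_prodFlow_subset hθ₁.preservesVars hF₁₂) (flowVars_prodFlow_subset hθ₂V hF₃₄)),
      rfl⟩
  exact (hab.unique hc).trans (htd.unique hd (.refl p) (.refl q)).symm

/-- the tensor product of flows is well-defined on renaming classes,
and is functorial with respect to the product: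
`(f ⊗ g)(f' ⊗ g') = (ff') ⊗ (gg')` whenever both sides are defined. -/
theorem tensor_functorial :
    (∀ f f₂ g g₂ h h₂ : UFlow, FlowEquiv f f₂ → FlowEquiv g g₂ →
      IsTensor f g h → IsTensor f₂ g₂ h₂ → FlowEquiv h h₂) ∧
    (∀ f g f' g' a b c p q d : UFlow,
      IsFlow f → IsFlow g → IsFlow f' → IsFlow g' →
      IsTensor f g a → IsTensor f' g' b → IsProd a b c →
      IsProd f f' p → IsProd g g' q → IsTensor p q d →
      FlowEquiv c d) :=
  ⟨fun _ _ _ _ _ _ hf hg ht ht₂ => ht.unique ht₂ hf hg,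
    fun _ _ _ _ _ _ _ _ _ _ _ _ _ _ hta htb hab hp hq htd =>
      flowEquiv_prod_tensor hta htb hab hp hq htd⟩
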